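/- Frame bound identity for the SGWT: with G(λ) = h(λ)² + Σ_{τ=1}^J g(t_τ λ)², the total energy of the SGWT coefficients equals Σ_l G(λ_l) f̂(l)². Consequently, if A ≤ G(λ) ≤ B on the spectrum of L, then A‖f‖² ≤ ‖h(L)f‖² + Σ_τ ‖g(t_τ L)f‖² ≤ B‖f‖². -/

import Mathlib

/- The rows `χ_l` form an orthogonal matrix `C`, and `φ(L) f = Cᵀ (φ(λ_l) f̂(l))_l`. Since `Cᵀ` and
`C` preserve the Euclidean norm, `‖φ(L) f‖² = Σ_l φ(λ_l)² f̂(l)²` and `‖f‖² = Σ_l f̂(l)²`; summing the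
first identity over the kernels `h, g(t_1 ·), …, g(t_J ·)` gives the energy `Σ_l G(λ_l) f̂(l)²`,
which lies between `A ‖f‖²` and `B ‖f‖²` termwise. -/

open Matrix

/-- Functional calculus applied to a signal, given the spectral data. -/
def specApply {N : ℕ} (lam : Fin N → ℝ) (chi : Fin N → Fin N → ℝ)
    (φ : ℝ → ℝ) (f : Fin N → ℝ) : Fin N → ℝ :=
  fun n => ∑ l, φ (lam l) * (chi l ⬝ᵥ f) * chi l n

theorem Matrix.mulVec_dotProduct_mulVec_self_of_transpose_mul_self {m n R : Type*} [Fintype m]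
    [Fintype n] [DecidableEq n] [CommSemiring R] {U : Matrix m n R} (hU : Uᵀ * U = 1) (v : n → R) :
    (U *ᵥ v) ⬝ᵥ (U *ᵥ v) = v ⬝ᵥ v := by
  rw [dotProduct_mulVec, ← mulVec_transpose, mulVec_mulVec, hU, one_mulVec]

theorem sum_sq_eq_dotProduct_self {n R : Type*} [Fintype n] [Monoid R] [AddCommMonoid R]
    (v : n → R) : ∑ i, v i ^ 2 = v ⬝ᵥ v := by
  simp only [dotProduct, sq]

section SpectralData

variable {N : ℕ} {chi : Fin N → Fin N → ℝ}

theorem of_mul_transpose_eq_one_of_orthonormal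
    (horth : ∀ i j, chi i ⬝ᵥ chi j = if i = j then (1 : ℝ) else 0) :
    of chi * (of chi)ᵀ = 1 := by
  ext i j
  exact horth i j

theorem specApply_eq_transpose_mulVec (lam : Fin N → ℝ) (φ : ℝ → ℝ) (f : Fin N → ℝ) :
    specApply lam chi φ f = (of chi)ᵀ *ᵥ fun l => φ (lam l) * (chi l ⬝ᵥ f) := by
  ext n
  simp only [specApply, mulVec, dotProduct, transpose_apply, of_apply, mul_comm]

theorem sum_sq_specApply (horth : ∀ i j, chi i ⬝ᵥ chi j = if i = j then (1 : ℝ) else 0)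
    (lam : Fin N → ℝ) (φ : ℝ → ℝ) (f : Fin N → ℝ) :
    ∑ n, specApply lam chi φ f n ^ 2 = ∑ l, φ (lam l) ^ 2 * (chi l ⬝ᵥ f) ^ 2 := by
  have hC : (of chi)ᵀᵀ * (of chi)ᵀ = 1 := of_mul_transpose_eq_one_of_orthonormal horth
  rw [sum_sq_eq_dotProduct_self, specApply_eq_transpose_mulVec,
    mulVec_dotProduct_mulVec_self_of_transpose_mul_self hC, ← sum_sq_eq_dotProduct_self]
  simp only [mul_pow]

theorem sum_sq_eq_sum_sq_dotProduct
    (horth : ∀ i j, chi i ⬝ᵥ chi j = if i = j then (1 : ℝ) else 0) (f : Fin N → ℝ) :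
    ∑ n, f n ^ 2 = ∑ l, (chi l ⬝ᵥ f) ^ 2 := by
  have hC : (of chi)ᵀ * of chi = 1 :=
    mul_eq_one_comm.mp (of_mul_transpose_eq_one_of_orthonormal horth)
  rw [sum_sq_eq_dotProduct_self, sum_sq_eq_dotProduct_self,
    ← mulVec_dotProduct_mulVec_self_of_transpose_mul_self hC]
  rfl

end SpectralData

theorem sgwt_frame_bound_identity_general {N J : ℕ}
    (lam : Fin N → ℝ) (chi : Fin N → Fin N → ℝ)
    (horth : ∀ i j, chi i ⬝ᵥ chi j = if i = j then (1 : ℝ) else 0)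
    (h g : ℝ → ℝ) (t : Fin J → ℝ)
    (G : ℝ → ℝ)
    (hG : G = fun x => h x ^ 2 + ∑ τ, g (t τ * x) ^ 2)
    (f : Fin N → ℝ) :
    ((∑ n, (specApply lam chi h f n) ^ 2) +
        ∑ τ, ∑ n, (specApply lam chi (fun x => g (t τ * x)) f n) ^ 2 =
      ∑ l, G (lam l) * (chi l ⬝ᵥ f) ^ 2) ∧
    (∀ A B : ℝ, (∀ l, A ≤ G (lam l) ∧ G (lam l) ≤ B) →
      A * ∑ n, f n ^ 2 ≤
          (∑ n, (specApply lam chi h f n) ^ 2) +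
            ∑ τ, ∑ n, (specApply lam chi (fun x => g (t τ * x)) f n) ^ 2 ∧
        (∑ n, (specApply lam chi h f n) ^ 2) +
            ∑ τ, ∑ n, (specApply lam chi (fun x => g (t τ * x)) f n) ^ 2 ≤
          B * ∑ n, f n ^ 2) := by
  have energy : (∑ n, (specApply lam chi h f n) ^ 2) +
      ∑ τ, ∑ n, (specApply lam chi (fun x => g (t τ * x)) f n) ^ 2 =
      ∑ l, G (lam l) * (chi l ⬝ᵥ f) ^ 2 := by
    simp only [sum_sq_specApply horth, hG, add_mul, Finset.sum_mul, Finset.sum_add_distrib]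
    rw [Finset.sum_comm]
  refine ⟨energy, fun A B hAB => ?_⟩
  rw [energy, sum_sq_eq_sum_sq_dotProduct horth, Finset.mul_sum, Finset.mul_sum]
  exact ⟨Finset.sum_le_sum fun l _ => mul_le_mul_of_nonneg_right (hAB l).1 (sq_nonneg _),
    Finset.sum_le_sum fun l _ => mul_le_mul_of_nonneg_right (hAB l).2 (sq_nonneg _)⟩

theorem sgwt_frame_bound_identity {N J : ℕ}
    (lam : Fin N → ℝ) (chi : Fin N → Fin N → ℝ)
    (horth : ∀ i j, chi i ⬝ᵥ chi j = if i = j then (1 : ℝ) else 0)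
    (hpsd : ∀ l, 0 ≤ lam l)
    (h g : ℝ → ℝ) (t : Fin J → ℝ)
    (G : ℝ → ℝ)
    (hG : G = fun x => h x ^ 2 + ∑ τ, g (t τ * x) ^ 2)
    (f : Fin N → ℝ) :
    ((∑ n, (specApply lam chi h f n) ^ 2) +
        ∑ τ, ∑ n, (specApply lam chi (fun x => g (t τ * x)) f n) ^ 2 =
      ∑ l, G (lam l) * (chi l ⬝ᵥ f) ^ 2) ∧
    (∀ A B : ℝ, (∀ l, A ≤ G (lam l) ∧ G (lam l) ≤ B) →
      A * ∑ n, f n ^ 2 ≤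
          (∑ n, (specApply lam chi h f n) ^ 2) +
            ∑ τ, ∑ n, (specApply lam chi (fun x => g (t τ * x)) f n) ^ 2 ∧
        (∑ n, (specApply lam chi h f n) ^ 2) +
            ∑ τ, ∑ n, (specApply lam chi (fun x => g (t τ * x)) f n) ^ 2 ≤
          B * ∑ n, f n ^ 2) :=
  sgwt_frame_bound_identity_general lam chi horth h g t G hG f
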